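/- Let A and S be finite non-empty subsets of an abelian group such that S is independent and every element of S has finite order. Write n = |S| and let d = min{ord s : s ∈ S}. If ∂_S(A) ≤ (1-γ)·n·|A| with a real γ ∈ (0,1], then |A| ≥ 4^{(1-1/d)·γ·n}. -/

import Mathlib

/-- The edge boundary of `A` with respect to `S`:
`∂_S(A) = |{(a,s) ∈ A × S : a + s ∉ A}|`. -/
def edgeBoundary {G : Type*} [AddCommGroup G] [DecidableEq G] (A S : Finset G) : ℕ :=
  ((A ×ˢ S).filter (fun p => p.1 + p.2 ∉ A)).card

/-- A finite subset `S` of an abelian group is independent if whenever an integral linear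
combination `∑_{s ∈ S} k(s)·s` vanishes, every summand `k(s)·s` vanishes. -/
def IsIndependent {G : Type*} [AddCommGroup G] (S : Finset G) : Prop :=
  ∀ k : G → ℤ, ∑ s ∈ S, k s • s = 0 → ∀ s ∈ S, k s • s = 0

/-! Split `A`, for each `s ∈ S`, into its lines `A ∩ (a + ⟨s⟩)`. A line with `m` points either
contains a point that `+s` moves out of `A`, or it is a full coset of `⟨s⟩` and `m ≥ ord s ≥ d`;
together with `(m - 1) log 4 ≤ m log m` this gives `(1 - 1/d) log 4 · (m - b) ≤ m log m` for a line
with `b` boundary points. Summing over lines and directions,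
`(1 - 1/d) log 4 · (n|A| - ∂_S(A)) ≤ ∑ₛ ∑ₐ log |A ∩ (a + ⟨s⟩)| ≤ |A| log |A|`,
the last step being Han's inequality for independent directions. Han's inequality follows by
induction on `S`: the fibres of `a ↦ (a + ⟨s⟩, a + ⟨S'⟩)` are singletons, so the rectangles
spanned by the two fibres through `a` are disjoint in `A × A`, and concavity of `log` gives
`∑ₐ log |A ∩ (a + ⟨s⟩)| + log |A ∩ (a + ⟨S'⟩)| ≤ |A| log |A|`. -/

open Finset Real

lemma sub_one_mul_log_four_le_mul_log {x : ℝ} (hx : 2 ≤ x) : (x - 1) * log 4 ≤ x * log x := by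
  have hlog4 : log 4 = 2 * log 2 := by
    rw [show (4 : ℝ) = 2 ^ 2 by norm_num, log_pow]; push_cast; ring
  have hlog2 : log 2 ≤ 1 := by linarith [log_two_lt_d9]
  have hdiv : x * log (2 / x) ≤ 2 - x := by
    have := mul_le_mul_of_nonneg_left (log_le_sub_one_of_pos (show 0 < 2 / x by positivity))
      (show 0 ≤ x by linarith)
    rwa [mul_sub, mul_div_cancel₀ _ (by positivity), mul_one] at this
  rw [log_div (by norm_num) (by positivity)] at hdiv
  nlinarith [mul_nonneg (show 0 ≤ x - 2 by linarith) (show 0 ≤ 1 - log 2 by linarith)]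

lemma natCast_sub_one_mul_log_four_le (m : ℕ) : ((m : ℝ) - 1) * log 4 ≤ m * log m := by
  rcases lt_or_ge m 2 with hm | hm
  · interval_cases m <;> norm_num
    positivity
  · exact sub_one_mul_log_four_le_mul_log (by exact_mod_cast hm)

/-- The bound for one line `ℓ = a + ⟨s⟩`: `m = |A ∩ ℓ|` and `b` is the number of points of
`A ∩ ℓ` that `+s` moves out of `A`. -/
lemma one_sub_one_div_mul_log_four_mul_sub_le {d m b : ℕ} (hd : 0 < d) (hbm : b ≤ m)
    (hb : b = 0 → d ≤ m) : (1 - 1 / (d : ℝ)) * log 4 * (m - b) ≤ m * log m := by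
  have hlog4 : 0 < log 4 := log_pos (by norm_num)
  have hdR : (1 : ℝ) ≤ d := by exact_mod_cast hd
  have hcoef : 0 ≤ 1 - 1 / (d : ℝ) := sub_nonneg.2 (div_le_one_of_le₀ hdR (by positivity))
  rcases Nat.eq_zero_or_pos b with rfl | hb1
  · have hdm : (d : ℝ) ≤ m := by exact_mod_cast hb rfl
    have hkey : (1 - 1 / (d : ℝ)) * log 4 ≤ log d := by
      have := natCast_sub_one_mul_log_four_le d
      rw [one_sub_div (by positivity), div_mul_eq_mul_div, div_le_iff₀ (by positivity)]
      linarith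
    have := log_le_log (by positivity) hdm
    push_cast
    nlinarith
  · have hmb : (1 : ℝ) ≤ m := by exact_mod_cast hb1.trans_le hbm
    have hbR : (1 : ℝ) ≤ b := by exact_mod_cast hb1
    have := natCast_sub_one_mul_log_four_le m
    have h1 : 1 - 1 / (d : ℝ) ≤ 1 := by simp
    nlinarith [mul_nonneg hcoef hlog4.le, mul_nonneg (sub_nonneg.2 h1) hlog4.le]

section Fibers

variable {α β γ : Type*} [DecidableEq β]

def fiberCard (f : α → β) (A : Finset α) (a : α) : ℕ := #{b ∈ A | f b = f a}

lemma fiberCard_pos (f : α → β) {A : Finset α} {a : α} (ha : a ∈ A) : 0 < fiberCard f A a :=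
  card_pos.2 ⟨a, mem_filter.2 ⟨ha, rfl⟩⟩

lemma fiberCard_of_mem_fiber (f : α → β) {A : Finset α} {a : α} {c : β}
    (ha : a ∈ ({b ∈ A | f b = c} : Finset α)) : fiberCard f A a = #{b ∈ A | f b = c} := by
  rw [fiberCard, (mem_filter.1 ha).2]

lemma fiberCard_filter_of_imp {f : α → β} {g : α → γ} [DecidableEq γ] {A : Finset α} {a : α}
    (hfg : ∀ b, f b = f a → g b = g a) :
    fiberCard f {b ∈ A | g b = g a} a = fiberCard f A a := by
  rw [fiberCard, fiberCard, filter_filter]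
  exact congrArg card (filter_congr fun b _ ↦ ⟨fun h ↦ h.2, fun h ↦ ⟨hfg b h, h⟩⟩)

lemma sum_comp_fiberCard {M : Type*} [AddCommMonoid M] (f : α → β) (A : Finset α) (φ : ℕ → M) :
    ∑ a ∈ A, φ (fiberCard f A a) =
      ∑ c ∈ A.image f, #{b ∈ A | f b = c} • φ #{b ∈ A | f b = c} := by
  rw [← sum_fiberwise_of_maps_to (fun a ha ↦ mem_image_of_mem f ha)]
  refine sum_congr rfl fun c _ ↦ ?_
  rw [sum_congr rfl fun a ha ↦ by rw [fiberCard_of_mem_fiber f ha], sum_const]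

lemma sum_log_le_card_mul_log_card {A : Finset α} {u : α → ℝ} (hu : ∀ a ∈ A, 0 < u a)
    (hsum : ∑ a ∈ A, u a ≤ #A ^ 2) : ∑ a ∈ A, log (u a) ≤ #A * log #A := by
  rcases A.eq_empty_or_nonempty with rfl | hA
  · simp
  have hk : (0 : ℝ) < #A := by exact_mod_cast hA.card_pos
  -- tangent line of `log` at `#A`
  have htangent : ∀ a ∈ A, log (u a) ≤ u a / #A - 1 + log #A := fun a ha ↦ by
    have := log_le_sub_one_of_pos (div_pos (hu a ha) hk)
    rw [log_div (hu a ha).ne' hk.ne'] at this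
    linarith
  calc ∑ a ∈ A, log (u a) ≤ ∑ a ∈ A, (u a / #A - 1 + log #A) := sum_le_sum htangent
    _ = (∑ a ∈ A, u a) / #A - #A + #A * log #A := by
        rw [sum_add_distrib, sum_sub_distrib, ← sum_div]; simp
    _ ≤ #A * log #A := by
        have : (∑ a ∈ A, u a) / #A ≤ #A := by rw [div_le_iff₀ hk]; nlinarith
        linarith

/-- If `a ↦ (f a, g a)` is injective on `A`, the rectangles `Rₐ = F_f(a) × F_g(a)` spanned by the
two fibres through `a` are pairwise disjoint subsets of `A × A`, so `∑ₐ |Rₐ| ≤ |A|²`. -/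
lemma sum_card_fiber_mul_card_fiber_le {f : α → β} {g : α → γ} [DecidableEq γ] {A : Finset α}
    (hinj : Set.InjOn (fun a ↦ (f a, g a)) A) :
    ∑ a ∈ A, fiberCard f A a * fiberCard g A a ≤ #A ^ 2 := by
  classical
  set R : α → Finset (α × α) := fun a ↦ {b ∈ A | f b = f a} ×ˢ {b ∈ A | g b = g a}
  have hdisj : (A : Set α).PairwiseDisjoint R := by
    intro a ha a' ha' hne
    refine disjoint_left.2 fun ⟨b, c⟩ h h' ↦ hne (hinj ha ha' ?_)
    simp only [R, mem_product, mem_filter] at h h'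
    exact Prod.ext (h.1.2.symm.trans h'.1.2) (h.2.2.symm.trans h'.2.2)
  calc ∑ a ∈ A, fiberCard f A a * fiberCard g A a = #(A.biUnion R) := by
        rw [card_biUnion hdisj]; simp [R, fiberCard, card_product]
    _ ≤ #(A ×ˢ A) := card_le_card <| biUnion_subset.2 fun a _ ↦
        product_subset_product (filter_subset _ _) (filter_subset _ _)
    _ = #A ^ 2 := by rw [card_product, sq]

lemma sum_log_fiberCard_add_log_fiberCard_le {f : α → β} {g : α → γ} [DecidableEq γ]
    {A : Finset α} (hinj : Set.InjOn (fun a ↦ (f a, g a)) A) :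
    ∑ a ∈ A, (log (fiberCard f A a) + log (fiberCard g A a)) ≤ #A * log #A := by
  have hpos : ∀ a ∈ A, (0 : ℝ) < fiberCard f A a * fiberCard g A a := fun a ha ↦ by
    have := fiberCard_pos f ha; have := fiberCard_pos g ha; positivity
  calc ∑ a ∈ A, (log (fiberCard f A a) + log (fiberCard g A a))
      = ∑ a ∈ A, log ((fiberCard f A a : ℝ) * fiberCard g A a) :=
        sum_congr rfl fun a ha ↦ (log_mul (Nat.cast_ne_zero.2 (fiberCard_pos f ha).ne')
          (Nat.cast_ne_zero.2 (fiberCard_pos g ha).ne')).symm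
    _ ≤ #A * log #A := sum_log_le_card_mul_log_card hpos
        (by exact_mod_cast sum_card_fiber_mul_card_fiber_le hinj)

end Fibers

section Group

variable {G : Type*} [AddCommGroup G]

lemma IsIndependent.mono {S T : Finset G} (hS : IsIndependent S) (hTS : T ⊆ S) :
    IsIndependent T := by
  classical
  intro k hk s hs
  have h := hS (fun g ↦ if g ∈ T then k g else 0) (by
    rw [← sum_subset hTS fun g _ hg ↦ by simp [hg]]
    simpa [sum_congr rfl fun g hg ↦ if_pos hg] using hk) s (hTS hs)
  simpa [hs] using h

open Submodule in
lemma IsIndependent.disjoint_span_singleton {S : Finset G} {s : G} [DecidableEq G]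
    (hS : IsIndependent (insert s S)) (hs : s ∉ S) :
    Disjoint (span ℤ {s}) (span ℤ (S : Set G)) := by
  rw [disjoint_def]
  rintro _ hx hxS
  obtain ⟨k, rfl⟩ := mem_span_singleton.1 hx
  obtain ⟨f, -, hf⟩ := mem_span_finset.1 hxS
  have hsum : ∑ g ∈ insert s S, (if g = s then k else -f g) • g = 0 := by
    rw [sum_insert hs, if_pos rfl,
      sum_congr rfl fun g hg ↦ by rw [if_neg (ne_of_mem_of_not_mem hg hs)], ← hf]
    simp [neg_smul, sum_neg_distrib]
  simpa using hS _ hsum s (mem_insert_self s S)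

lemma addOrderOf_le_card_of_add_mem {F : Finset G} {s : G} (hF : F.Nonempty)
    (hadd : ∀ a ∈ F, a + s ∈ F) : addOrderOf s ≤ #F := by
  obtain ⟨a, ha⟩ := hF
  have hmem : ∀ k : ℕ, a + k • s ∈ F := fun k ↦ by
    induction k with
    | zero => simpa using ha
    | succ k ih => simpa [succ_nsmul, ← add_assoc] using hadd _ ih
  exact le_card_of_inj_on_range (fun k ↦ a + k • s) (fun k _ ↦ hmem k)
    fun i hi j hj h ↦ nsmul_injOn_Iio_addOrderOf hi hj (add_left_cancel h)

end Group

section Isoperimetry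

open Submodule
open scoped Classical

variable {G : Type*} [AddCommGroup G]

lemma fiberCard_mkQ_filter_of_le {K H : Submodule ℤ G} (hKH : K ≤ H) (A : Finset G) (a : G) :
    fiberCard K.mkQ {b ∈ A | H.mkQ b = H.mkQ a} a = fiberCard K.mkQ A a := by
  refine fiberCard_filter_of_imp (g := H.mkQ) fun b h ↦ ?_
  rw [mkQ_apply, mkQ_apply, Submodule.Quotient.eq] at h ⊢
  exact hKH h

/-- Han's inequality for the lines of `A` in the directions of an independent set. -/
theorem IsIndependent.sum_sum_log_fiberCard_le {S : Finset G} (hS : IsIndependent S)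
    (A : Finset G) : ∑ s ∈ S, ∑ a ∈ A, log (fiberCard (span ℤ {s}).mkQ A a) ≤ #A * log #A := by
  induction S using Finset.induction_on generalizing A with
  | empty => simpa using mul_nonneg (Nat.cast_nonneg _) (log_natCast_nonneg _)
  | @insert s S hs ih =>
    set H := span ℤ (S : Set G)
    have hinj : Set.InjOn (fun a ↦ ((span ℤ {s}).mkQ a, H.mkQ a)) A := fun a _ b _ h ↦ by
      simp only [Prod.mk.injEq, mkQ_apply, Submodule.Quotient.eq] at h
      exact sub_eq_zero.1 (disjoint_def.1 (hS.disjoint_span_singleton hs) _ h.1 h.2)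
    -- each line in a direction of `S` lies in a single coset of `H`, so the
    -- inductive hypothesis applies coset by coset
    have hcosets : ∑ t ∈ S, ∑ a ∈ A, log (fiberCard (span ℤ {t}).mkQ A a)
        ≤ ∑ a ∈ A, log (fiberCard H.mkQ A a) := by
      rw [sum_comp_fiberCard H.mkQ A (fun m ↦ log m), sum_comm,
        ← sum_fiberwise_of_maps_to (fun a ha ↦ mem_image_of_mem H.mkQ ha)]
      refine sum_le_sum fun c _ ↦ ?_
      calc ∑ a ∈ A with H.mkQ a = c, ∑ t ∈ S, log (fiberCard (span ℤ {t}).mkQ A a)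
          = ∑ t ∈ S, ∑ a ∈ A with H.mkQ a = c,
              log (fiberCard (span ℤ {t}).mkQ {b ∈ A | H.mkQ b = c} a) := by
            rw [sum_comm]
            refine sum_congr rfl fun t ht ↦ sum_congr rfl fun a ha ↦ ?_
            rw [← (mem_filter.1 ha).2, fiberCard_mkQ_filter_of_le
              (span_le.2 (by simpa using subset_span (mem_coe.2 ht)))]
        _ ≤ #{b ∈ A | H.mkQ b = c} * log #{b ∈ A | H.mkQ b = c} :=
            ih (hS.mono (subset_insert s S)) _
        _ = #{b ∈ A | H.mkQ b = c} • log #{b ∈ A | H.mkQ b = c} := (nsmul_eq_mul _ _).symm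
    have := sum_log_fiberCard_add_log_fiberCard_le hinj
    rw [sum_add_distrib] at this
    rw [sum_insert hs]
    linarith

lemma mul_card_sub_card_le_sum_log_fiberCard [DecidableEq G] {d : ℕ} (hd : 0 < d) {s : G}
    (hds : d ≤ addOrderOf s) (A : Finset G) :
    (1 - 1 / (d : ℝ)) * log 4 * (#A - #{a ∈ A | a + s ∉ A}) ≤
      ∑ a ∈ A, log (fiberCard (span ℤ {s}).mkQ A a) := by
  set p := (span ℤ {s}).mkQ
  set B := {a ∈ A | a + s ∉ A}
  have hmaps : ∀ a ∈ A, p a ∈ A.image p := fun a ha ↦ mem_image_of_mem p ha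
  rw [card_eq_sum_card_fiberwise hmaps,
    card_eq_sum_card_fiberwise fun a ha ↦ hmaps a (mem_filter.1 ha).1,
    sum_comp_fiberCard p A (fun m ↦ log m)]
  push_cast
  rw [← sum_sub_distrib, mul_sum]
  refine sum_le_sum fun c hc ↦ ?_
  rw [nsmul_eq_mul]
  refine one_sub_one_div_mul_log_four_mul_sub_le hd
    (card_le_card fun a ha ↦ by simp_all) fun hB ↦ hds.trans ?_
  -- a line without boundary points is invariant under `+s`, hence a full coset of `⟨s⟩`
  refine addOrderOf_le_card_of_add_mem ?_ fun a ha ↦ ?_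
  · obtain ⟨a, ha, rfl⟩ := mem_image.1 hc
    exact ⟨a, mem_filter.2 ⟨ha, rfl⟩⟩
  · obtain ⟨haA, rfl⟩ := mem_filter.1 ha
    have has : a + s ∈ A := by
      by_contra h
      exact notMem_empty a (card_eq_zero.1 hB ▸ mem_filter.2 ⟨mem_filter.2 ⟨haA, h⟩, rfl⟩)
    refine mem_filter.2 ⟨has, ?_⟩
    simp [p, mem_span_singleton_self]

end Isoperimetry

lemma edgeBoundary_eq_sum {G : Type*} [AddCommGroup G] [DecidableEq G] (A S : Finset G) :
    edgeBoundary A S = ∑ s ∈ S, #{a ∈ A | a + s ∉ A} := by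
  rw [edgeBoundary, card_filter, sum_product, sum_comm]
  exact sum_congr rfl fun s _ ↦ (card_filter _ _).symm

theorem isoperimetric_general_finite_order_general {G : Type*} [AddCommGroup G] [DecidableEq G]
    (S : Finset G) (hind : IsIndependent S)
    (hford : ∀ s ∈ S, IsOfFinAddOrder s)
    (d : ℕ) (hd_mem : ∃ s ∈ S, addOrderOf s = d) (hd_min : ∀ s ∈ S, d ≤ addOrderOf s)
    (A : Finset G) (hA : A.Nonempty)
    (γ : ℝ)
    (hbd : (edgeBoundary A S : ℝ) ≤ (1 - γ) * S.card * A.card) :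
    (4 : ℝ) ^ ((1 - 1 / (d : ℝ)) * γ * S.card) ≤ A.card := by
  classical
  obtain ⟨s₀, hs₀, rfl⟩ := hd_mem
  have hd : 0 < addOrderOf s₀ := (hford s₀ hs₀).addOrderOf_pos
  set κ := (1 - 1 / (addOrderOf s₀ : ℝ)) * log 4
  have hκ : 0 ≤ κ := mul_nonneg (sub_nonneg.2 (div_le_one_of_le₀ (by exact_mod_cast hd)
    (Nat.cast_nonneg _))) (log_nonneg (by norm_num))
  have hA₀ : (0 : ℝ) < #A := by exact_mod_cast hA.card_pos
  have hsum : κ * (#S * #A - edgeBoundary A S) ≤ #A * log #A :=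
    calc κ * (#S * #A - edgeBoundary A S) = ∑ s ∈ S, κ * (#A - #{a ∈ A | a + s ∉ A}) := by
          rw [edgeBoundary_eq_sum, ← mul_sum, sum_sub_distrib]; simp
      _ ≤ ∑ s ∈ S, ∑ a ∈ A, log (fiberCard (Submodule.span ℤ {s}).mkQ A a) :=
          sum_le_sum fun s hs ↦ mul_card_sub_card_le_sum_log_fiberCard hd (hd_min s hs) A
      _ ≤ #A * log #A := hind.sum_sum_log_fiberCard_le A
  have hlog : κ * γ * #S ≤ log #A := by
    refine le_of_mul_le_mul_right ?_ hA₀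
    nlinarith [mul_le_mul_of_nonneg_left hbd hκ]
  rw [rpow_le_iff_le_log (by norm_num) hA₀]
  linarith

/-- **Theorem 2 (general case, finite orders).** Let `A` and `S` be finite non-empty
subsets of an abelian group with `S` independent and all elements of `S` of finite order.
Write `n = |S|` and let `d = min{ord s : s ∈ S}`. If `∂_S(A) ≤ (1-γ)·n·|A|` with
`γ ∈ (0,1]`, then `|A| ≥ 4^{(1-1/d)·γ·n}`. -/
theorem isoperimetric_general_finite_order {G : Type*} [AddCommGroup G] [DecidableEq G]
    (S : Finset G) (hS : S.Nonempty) (hind : IsIndependent S)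
    (hford : ∀ s ∈ S, IsOfFinAddOrder s)
    (d : ℕ) (hd_mem : ∃ s ∈ S, addOrderOf s = d) (hd_min : ∀ s ∈ S, d ≤ addOrderOf s)
    (A : Finset G) (hA : A.Nonempty)
    (γ : ℝ) (hγ0 : 0 < γ) (hγ1 : γ ≤ 1)
    (hbd : (edgeBoundary A S : ℝ) ≤ (1 - γ) * S.card * A.card) :
    (4 : ℝ) ^ ((1 - 1 / (d : ℝ)) * γ * S.card) ≤ A.card :=
  isoperimetric_general_finite_order_general S hind hford d hd_mem hd_min A hA γ hbd
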